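/- Let S be a finite nonempty set, c a cost function, and {i,j} ∈ binom(S,2). If there exists R ⊆ S with {i,j} ∈ δ(R) such that c_{ij}^+ ≥ Σ_{{p,q,r}∈T_{δ(R)}} c_{pqr}^− + Σ_{{p,q}∈δ(R)} c_{pq}^−, then there exists an optimal solution x* of min_{x∈X_S} φ_c(x) such that x*_{ij} = 0. -/
import Mathlib

open Finset

/-- `binom(S,2)`: the set of 2-element subsets (unordered pairs) of the ground set. -/
def pairs (V : Type*) [Fintype V] [DecidableEq V] : Finset (Finset V) :=
  (univ : Finset V).powersetCard 2

/-- `binom(S,3)`: the set of 3-element subsets (unordered triples) of the ground set. -/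
def triples (V : Type*) [Fintype V] [DecidableEq V] : Finset (Finset V) :=
  (univ : Finset V).powersetCard 3

/-- The feasible set `X_S`: maps `x : binom(S,2) → {0,1}` satisfying the triangle
inequalities `x_{pq} + x_{qr} - x_{pr} ≤ 1` for all pairwise distinct `p, q, r`. -/
def feasible {V : Type*} [Fintype V] [DecidableEq V] (x : Finset V → ℝ) : Prop :=
  (∀ e ∈ pairs V, x e = 0 ∨ x e = 1) ∧
    ∀ p q r : V, p ≠ q → q ≠ r → p ≠ r →
      x {p, q} + x {q, r} - x {p, r} ≤ 1

/-- The cubic objective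
`φ_c(x) = Σ_{{p,q,r}} c_{pqr} x_{pq} x_{pr} x_{qr} + Σ_{{p,q}} c_{pq} x_{pq} + c_∅`. -/
def obj {V : Type*} [Fintype V] [DecidableEq V] (c x : Finset V → ℝ) : ℝ :=
  ∑ t ∈ triples V, c t * ∏ e ∈ t.powersetCard 2, x e
    + ∑ e ∈ pairs V, c e * x e + c ∅

/-- `δ(R)`: the pairs having exactly one element in `R`. -/
def cut {V : Type*} [Fintype V] [DecidableEq V] (R : Finset V) : Finset (Finset V) :=
  (pairs V).filter fun e => (e ∩ R).card = 1

/-- `T_{P'}`: the triples having some 2-element subset in `P'`. -/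
def Tof {V : Type*} [Fintype V] [DecidableEq V] (P' : Finset (Finset V)) :
    Finset (Finset V) :=
  (triples V).filter fun t => ∃ e ∈ t.powersetCard 2, e ∈ P'

section Helpers

variable {V : Type*} [Fintype V] [DecidableEq V]

lemma mem_pairs_iff (e : Finset V) : e ∈ pairs V ↔ e.card = 2 := by
  simp [pairs, Finset.mem_powersetCard_univ]

lemma pair_mem_pairs {p q : V} (h : p ≠ q) : ({p, q} : Finset V) ∈ pairs V := by
  rw [mem_pairs_iff]; exact card_pair h

lemma edge_mem_pairs {t e : Finset V} (he : e ∈ t.powersetCard 2) :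
    e ∈ pairs V := by
  rw [mem_pairs_iff]; exact (Finset.mem_powersetCard.1 he).2

lemma mem_cut_pair {p q : V} (hpq : p ≠ q) (R : Finset V) :
    ({p, q} : Finset V) ∈ cut R ↔ ((p ∈ R) ↔ (q ∉ R)) := by
  simp only [cut, Finset.mem_filter, pair_mem_pairs hpq, true_and]
  by_cases hp : p ∈ R <;> by_cases hq : q ∈ R <;>
    simp [Finset.insert_inter_of_mem, Finset.insert_inter_of_notMem,
      Finset.singleton_inter_of_mem, Finset.singleton_inter_of_notMem, hp, hq, hpq]

lemma cut_trans {p q r : V} (hpq : p ≠ q) (hqr : q ≠ r) (hpr : p ≠ r) (R : Finset V)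
    (h : ({p, r} : Finset V) ∈ cut R) :
    ({p, q} : Finset V) ∈ cut R ∨ ({q, r} : Finset V) ∈ cut R := by
  rw [mem_cut_pair hpr] at h
  rw [mem_cut_pair hpq, mem_cut_pair hqr]
  tauto

lemma feas_nonneg {x : Finset V → ℝ} (hx : feasible x) {e : Finset V} (he : e ∈ pairs V) :
    0 ≤ x e := by rcases hx.1 e he with h | h <;> rw [h] <;> norm_num

lemma feas_le_one {x : Finset V → ℝ} (hx : feasible x) {e : Finset V} (he : e ∈ pairs V) :
    x e ≤ 1 := by rcases hx.1 e he with h | h <;> rw [h] <;> norm_num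

lemma obj_congr {c x x' : Finset V → ℝ} (h : ∀ e ∈ pairs V, x e = x' e) :
    obj c x = obj c x' := by
  unfold obj
  congr 2
  · exact Finset.sum_congr rfl fun t ht => by
      rw [Finset.prod_congr rfl fun e he => h e (edge_mem_pairs he)]
  · exact Finset.sum_congr rfl fun e he => by rw [h e he]

lemma feasible_congr {x x' : Finset V → ℝ} (hx : feasible x)
    (h : ∀ e ∈ pairs V, x' e = x e) : feasible x' := by
  constructor
  · intro e he; rw [h e he]; exact hx.1 e he
  · intro p q r hpq hqr hpr
    rw [h _ (pair_mem_pairs hpq), h _ (pair_mem_pairs hqr), h _ (pair_mem_pairs hpr)]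
    exact hx.2 p q r hpq hqr hpr

lemma exists_min (c : Finset V → ℝ) :
    ∃ x0 : Finset V → ℝ, feasible x0 ∧ ∀ x, feasible x → obj c x0 ≤ obj c x := by
  classical
  set toX : (Finset V → Bool) → Finset V → ℝ := fun b e => if b e then 1 else 0 with htoX
  have hne : ((univ : Finset (Finset V → Bool)).filter fun b => feasible (toX b)).Nonempty := by
    refine ⟨fun _ => false, ?_⟩
    simp only [Finset.mem_filter, Finset.mem_univ, true_and]
    constructor
    · intro e _; simp [toX]
    · intro p q r _ _ _; simp [toX]
  obtain ⟨b0, hb0, hmin⟩ := Finset.exists_min_image _ (fun b => obj c (toX b)) hne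
  rw [Finset.mem_filter] at hb0
  refine ⟨toX b0, hb0.2, fun x hx => ?_⟩
  set b : Finset V → Bool := fun e => decide (x e = 1) with hb
  have hagree : ∀ e ∈ pairs V, toX b e = x e := by
    intro e he
    rcases hx.1 e he with h | h <;> simp [toX, b, h]
  have hfb : feasible (toX b) := feasible_congr hx hagree
  have := hmin b (Finset.mem_filter.2 ⟨Finset.mem_univ _, hfb⟩)
  calc obj c (toX b0) ≤ obj c (toX b) := this
    _ = obj c x := obj_congr hagree

lemma neg_eq_maxsub (r : ℝ) : -r = max (-r) 0 - max r 0 := by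
  rcases le_total r 0 with h | h
  · rw [max_eq_left (neg_nonneg.2 h), max_eq_right h]; ring
  · rw [max_eq_right (neg_nonpos.2 h), max_eq_left h]; ring

end Helpers

/--
Let `S` be a finite nonempty set, `c` a cost function, and
`{i,j} ∈ binom(S,2)`.  If there exists `R ⊆ S` with `{i,j} ∈ δ(R)` such that
`c_{ij}⁺ ≥ Σ_{{p,q,r} ∈ T_{δ(R)}} c_{pqr}⁻ + Σ_{{p,q} ∈ δ(R)} c_{pq}⁻`,
then there exists an optimal solution `x*` of `min_{x ∈ X_S} φ_c(x)` with `x*_{ij} = 0`.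
-/
theorem edge_cut_persistency {V : Type*} [Fintype V] [DecidableEq V] [Nonempty V]
    (c : Finset V → ℝ) (i j : V) (hij : i ≠ j) (R : Finset V)
    (hR : ({i, j} : Finset V) ∈ cut R)
    (h : max (c {i, j}) 0 ≥
        ∑ t ∈ Tof (cut R), max (-(c t)) 0 + ∑ e ∈ cut R, max (-(c e)) 0) :
    ∃ xstar : Finset V → ℝ, feasible xstar ∧
      (∀ x : Finset V → ℝ, feasible x → obj c xstar ≤ obj c x) ∧
      xstar {i, j} = 0 := by
  classical
  obtain ⟨x, hx, hxmin⟩ := exists_min c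
  have hijp : ({i, j} : Finset V) ∈ pairs V := pair_mem_pairs hij
  rcases hx.1 _ hijp with h0 | h1
  · exact ⟨x, hx, hxmin, h0⟩
  -- x {i,j} = 1 : zero out the cut
  set y : Finset V → ℝ := fun e => if e ∈ cut R then 0 else x e with hy
  have hyval : ∀ e, e ∈ cut R → y e = 0 := fun e he => by simp [y, he]
  have hyval' : ∀ e, e ∉ cut R → y e = x e := fun e he => by simp [y, he]
  have hcutp : cut R ⊆ pairs V := Finset.filter_subset _ _
  have hyfeas : feasible y := by
    constructor
    · intro e he
      by_cases hc : e ∈ cut R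
      · left; exact hyval e hc
      · rw [hyval' e hc]; exact hx.1 e he
    · intro p q r hpq hqr hpr
      have hpq' := pair_mem_pairs hpq
      have hqr' := pair_mem_pairs hqr
      have hpr' := pair_mem_pairs hpr
      by_cases hc : ({p, r} : Finset V) ∈ cut R
      · -- one of the other two edges is in the cut
        have hynn : 0 ≤ y {p, r} := by rw [hyval _ hc]
        rcases cut_trans hpq hqr hpr R hc with h1 | h1
        · have h2 : y {q, r} ≤ 1 := by
            by_cases hc2 : ({q, r} : Finset V) ∈ cut R
            · rw [hyval _ hc2]; norm_num
            · rw [hyval' _ hc2]; exact feas_le_one hx hqr'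
          rw [hyval _ h1]; linarith
        · have h2 : y {p, q} ≤ 1 := by
            by_cases hc2 : ({p, q} : Finset V) ∈ cut R
            · rw [hyval _ hc2]; norm_num
            · rw [hyval' _ hc2]; exact feas_le_one hx hpq'
          rw [hyval _ h1]; linarith
      · have h2 : y {p, q} ≤ x {p, q} := by
          by_cases hc2 : ({p, q} : Finset V) ∈ cut R
          · rw [hyval _ hc2]; exact feas_nonneg hx hpq'
          · rw [hyval' _ hc2]
        have h3 : y {q, r} ≤ x {q, r} := by
          by_cases hc2 : ({q, r} : Finset V) ∈ cut R
          · rw [hyval _ hc2]; exact feas_nonneg hx hqr'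
          · rw [hyval' _ hc2]
        have h4 := hx.2 p q r hpq hqr hpr
        rw [hyval' _ hc]
        linarith
  -- objective comparison
  have hobj : obj c y ≤ obj c x := by
    set Px : Finset V → ℝ := fun t => ∏ e ∈ t.powersetCard 2, x e with hPx
    set Py : Finset V → ℝ := fun t => ∏ e ∈ t.powersetCard 2, y e with hPy
    have hdiff : obj c y - obj c x =
        (∑ t ∈ triples V, (c t * Py t - c t * Px t))
          + ∑ e ∈ pairs V, (c e * y e - c e * x e) := by
      unfold obj
      rw [Finset.sum_sub_distrib, Finset.sum_sub_distrib]
      ring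
    have hT : ∑ t ∈ triples V, (c t * Py t - c t * Px t)
        = ∑ t ∈ Tof (cut R), (c t * Py t - c t * Px t) := by
      refine (Finset.sum_subset (Finset.filter_subset _ _) ?_).symm
      intro t ht htn
      have : ∀ e ∈ t.powersetCard 2, e ∉ cut R := by
        intro e he hc
        exact htn (Finset.mem_filter.2 ⟨ht, ⟨e, he, hc⟩⟩)
      have : Py t = Px t := Finset.prod_congr rfl fun e he => hyval' e (this e he)
      rw [this]; ring
    have hE : ∑ e ∈ pairs V, (c e * y e - c e * x e)
        = ∑ e ∈ cut R, (c e * y e - c e * x e) := by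
      refine (Finset.sum_subset hcutp ?_).symm
      intro e he hen
      rw [hyval' e hen]; ring
    -- bound triple terms
    have hTb : ∑ t ∈ Tof (cut R), (c t * Py t - c t * Px t)
        ≤ ∑ t ∈ Tof (cut R), max (-(c t)) 0 := by
      refine Finset.sum_le_sum fun t ht => ?_
      obtain ⟨ht', e, he, hec⟩ := by
        simpa only [Tof, Finset.mem_filter] using ht
      have hPy0 : Py t = 0 := Finset.prod_eq_zero he (hyval e hec)
      have hPx0 : 0 ≤ Px t :=
        Finset.prod_nonneg fun e he => feas_nonneg hx (edge_mem_pairs he)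
      have hPx1 : Px t ≤ 1 :=
        Finset.prod_le_one (fun e he => feas_nonneg hx (edge_mem_pairs he))
          (fun e he => feas_le_one hx (edge_mem_pairs he))
      rw [hPy0]
      have : -(c t) * Px t ≤ max (-(c t)) 0 * Px t :=
        mul_le_mul_of_nonneg_right (le_max_left _ _) hPx0
      have h2 : max (-(c t)) 0 * Px t ≤ max (-(c t)) 0 * 1 :=
        mul_le_mul_of_nonneg_left hPx1 (le_max_right _ _)
      nlinarith
    -- bound edge terms, special-casing {i,j}
    have hEb : ∑ e ∈ cut R, (c e * y e - c e * x e)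
        ≤ ∑ e ∈ cut R, max (-(c e)) 0 - max (c {i, j}) 0 := by
      rw [← Finset.add_sum_erase _ _ hR, ← Finset.add_sum_erase _ (fun e => max (-(c e)) 0) hR]
      have hterm : c {i, j} * y {i, j} - c {i, j} * x {i, j}
          = max (-(c {i, j})) 0 - max (c {i, j}) 0 := by
        rw [hyval _ hR, h1, mul_zero, mul_one, zero_sub]; exact neg_eq_maxsub _
      rw [hterm]
      have hrest : ∑ e ∈ (cut R).erase {i, j}, (c e * y e - c e * x e)
          ≤ ∑ e ∈ (cut R).erase {i, j}, max (-(c e)) 0 := by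
        refine Finset.sum_le_sum fun e he => ?_
        have hec : e ∈ cut R := Finset.mem_of_mem_erase he
        have hep : e ∈ pairs V := hcutp hec
        have hx0 : 0 ≤ x e := feas_nonneg hx hep
        have hx1 : x e ≤ 1 := feas_le_one hx hep
        rw [hyval _ hec, mul_zero, zero_sub]
        have : -(c e) * x e ≤ max (-(c e)) 0 * x e :=
          mul_le_mul_of_nonneg_right (le_max_left _ _) hx0
        have h2 : max (-(c e)) 0 * x e ≤ max (-(c e)) 0 * 1 :=
          mul_le_mul_of_nonneg_left hx1 (le_max_right _ _)
        nlinarith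
      linarith
    rw [hT, hE] at hdiff
    linarith
  refine ⟨y, hyfeas, fun z hz => le_trans hobj (hxmin z hz), hyval _ hR⟩
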